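/- arXiv:2307.15012 — 5 statements merged into one kernel-verified Lean document; each statement's English description precedes it below -/
import Mathlib

section
/- Let k ≥ 2 and n ≥ 1 be integers. The shuffle group G_{k,kn} is contained in the alternating group Alt([kn]) if and only if either (n ≡ 2 (mod 4) and k ≡ 0 or 1 (mod 4)) or n ≡ 0 (mod 4). -/
lemma shuffleAux.div_lt (k n : ℕ) (x : Fin (k * n)) : (x : ℕ) / n < k := by
  have hx := x.isLt
  have hn : 0 < n := by
    rcases Nat.eq_zero_or_pos n with rfl | h
    · simp at hx
    · exact h
  exact (Nat.div_lt_iff_lt_mul hn).mpr hx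

lemma shuffleAux.mod_lt (k n : ℕ) (x : Fin (k * n)) : (x : ℕ) % n < n := by
  have hx := x.isLt
  have hn : 0 < n := by
    rcases Nat.eq_zero_or_pos n with rfl | h
    · simp at hx
    · exact h
  exact Nat.mod_lt _ hn

lemma shuffleAux.bound1 (k n : ℕ) (x : Fin (k * n)) :
    k * ((x : ℕ) % n) + (x : ℕ) / n < k * n := by
  have h1 := shuffleAux.mod_lt k n x
  have h2 := shuffleAux.div_lt k n x
  calc k * ((x : ℕ) % n) + (x : ℕ) / n
      < k * ((x : ℕ) % n) + k := by omega
    _ = k * ((x : ℕ) % n + 1) := by ring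
    _ ≤ k * n := Nat.mul_le_mul_left _ (by omega)

lemma shuffleAux.bound2 (k n : ℕ) (x : Fin (k * n)) (j : Fin k) :
    (x : ℕ) % n + (j : ℕ) * n < k * n := by
  have h1 := shuffleAux.mod_lt k n x
  have h2 := j.isLt
  calc (x : ℕ) % n + (j : ℕ) * n
      < n + (j : ℕ) * n := by omega
    _ = ((j : ℕ) + 1) * n := by ring
    _ ≤ k * n := Nat.mul_le_mul_right _ (by omega)

/-- The standard shuffle `σ` on a deck of `k * n` cards, where the card in position
`i + j·n` (`i ∈ [n]`, `j ∈ [k]`) is sent to position `k·i + j`; equivalently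
`σ(x) = k·(x mod n) + ⌊x / n⌋`. -/
noncomputable def stdShuffle (k n : ℕ) : Equiv.Perm (Fin (k * n)) :=
  Equiv.ofBijective
    (fun x => ⟨k * ((x : ℕ) % n) + (x : ℕ) / n, shuffleAux.bound1 k n x⟩)
    (Finite.injective_iff_bijective.mp (by
      intro x y hxy
      simp only [Fin.mk.injEq] at hxy
      have hk : 0 < k := lt_of_le_of_lt (Nat.zero_le _) (shuffleAux.div_lt k n x)
      have key : ∀ z : Fin (k * n),
          (k * ((z : ℕ) % n) + (z : ℕ) / n) % k = (z : ℕ) / n ∧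
          (k * ((z : ℕ) % n) + (z : ℕ) / n) / k = (z : ℕ) % n := by
        intro z
        have hz := shuffleAux.div_lt k n z
        constructor
        · rw [Nat.mul_add_mod, Nat.mod_eq_of_lt hz]
        · rw [Nat.mul_add_div hk, Nat.div_eq_of_lt hz, Nat.add_zero]
      obtain ⟨h1x, h2x⟩ := key x
      obtain ⟨h1y, h2y⟩ := key y
      rw [hxy] at h1x h2x
      have hd : (x : ℕ) / n = (y : ℕ) / n := by omega
      have hm : (x : ℕ) % n = (y : ℕ) % n := by omega
      apply Fin.ext
      rw [← Nat.div_add_mod (x : ℕ) n, ← Nat.div_add_mod (y : ℕ) n, hd, hm]))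

/-- The permutation `ρ_τ` induced by a permutation `τ` of the `k` piles:
`ρ_τ(i + j·n) = i + τ(j)·n` for `i ∈ [n]`, `j ∈ [k]`. -/
noncomputable def pilePerm (k n : ℕ) (τ : Equiv.Perm (Fin k)) : Equiv.Perm (Fin (k * n)) :=
  Equiv.ofBijective
    (fun x => ⟨(x : ℕ) % n + ((τ ⟨(x : ℕ) / n, shuffleAux.div_lt k n x⟩ : Fin k) : ℕ) * n,
      shuffleAux.bound2 k n x _⟩)
    (Finite.injective_iff_bijective.mp (by
      intro x y hxy
      simp only [Fin.mk.injEq] at hxy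
      have hn : 0 < n := lt_of_le_of_lt (Nat.zero_le _) (shuffleAux.mod_lt k n x)
      have key : ∀ z : Fin (k * n),
          ((z : ℕ) % n + ((τ ⟨(z : ℕ) / n, shuffleAux.div_lt k n z⟩ : Fin k) : ℕ) * n) % n
            = (z : ℕ) % n ∧
          ((z : ℕ) % n + ((τ ⟨(z : ℕ) / n, shuffleAux.div_lt k n z⟩ : Fin k) : ℕ) * n) / n
            = ((τ ⟨(z : ℕ) / n, shuffleAux.div_lt k n z⟩ : Fin k) : ℕ) := by
        intro z
        have h1 := shuffleAux.mod_lt k n z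
        constructor
        · rw [Nat.add_mul_mod_self_right, Nat.mod_eq_of_lt h1]
        · rw [Nat.add_mul_div_right _ _ hn, Nat.div_eq_of_lt h1, Nat.zero_add]
      obtain ⟨h1x, h2x⟩ := key x
      obtain ⟨h1y, h2y⟩ := key y
      rw [hxy] at h1x h2x
      have hm : (x : ℕ) % n = (y : ℕ) % n := by omega
      have hv : ((τ ⟨(x : ℕ) / n, shuffleAux.div_lt k n x⟩ : Fin k) : ℕ)
          = ((τ ⟨(y : ℕ) / n, shuffleAux.div_lt k n y⟩ : Fin k) : ℕ) := by omega
      have hτ : (⟨(x : ℕ) / n, shuffleAux.div_lt k n x⟩ : Fin k)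
          = ⟨(y : ℕ) / n, shuffleAux.div_lt k n y⟩ := τ.injective (Fin.ext hv)
      have hd : (x : ℕ) / n = (y : ℕ) / n := congrArg Fin.val hτ
      apply Fin.ext
      rw [← Nat.div_add_mod (x : ℕ) n, ← Nat.div_add_mod (y : ℕ) n, hd, hm]))

/-- The shuffle group `G_{k,kn}`, generated by the standard shuffle `σ` together with
the pile permutations `ρ_τ` for all `τ ∈ Sym([k])`. -/
noncomputable def shuffleGroup (k n : ℕ) : Subgroup (Equiv.Perm (Fin (k * n))) :=
  Subgroup.closure ({stdShuffle k n} ∪ Set.range (pilePerm k n))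

section ShuffleProof

open Equiv Equiv.Perm Finset


lemma cardLtPairs (m : ℕ) :
    #(univ.filter fun p : Fin m × Fin m => p.1 < p.2) = ∑ i ∈ range m, i := by
  rw [Finset.card_eq_sum_card_fiberwise (f := fun p : Fin m × Fin m => p.2) (t := univ)
    (fun x _ => mem_univ _)]
  rw [← Fin.sum_univ_eq_sum_range]
  refine Finset.sum_congr rfl fun b _ => ?_
  rw [Finset.filter_filter]
  rw [← Fin.card_Iio b]
  refine Finset.card_bij' (fun p _ => p.1) (fun a _ => (a, b)) ?_ ?_ ?_ ?_
  · intro p hp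
    simp only [mem_filter, mem_univ, true_and] at hp
    simpa [Finset.mem_Iio] using hp.2 ▸ hp.1
  · intro a ha
    simp only [Finset.mem_Iio] at ha
    simp [ha]
  · intro p hp
    simp only [mem_filter, mem_univ, true_and] at hp
    exact Prod.ext rfl hp.2.symm
  · intro a _
    rfl

lemma twoMulCardLtPairs (m : ℕ) :
    2 * #(univ.filter fun p : Fin m × Fin m => p.1 < p.2) = m * (m - 1) := by
  rw [cardLtPairs, mul_comm, Finset.sum_range_id_mul_two]

lemma halfParity (m c : ℕ) (h : 2 * c = (m + 1) * m) :
    Even c ↔ ((m + 1) % 4 = 0 ∨ (m + 1) % 4 = 1) := by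
  obtain ⟨q, s, hs, rfl⟩ : ∃ q s, s < 4 ∧ m = 4 * q + s :=
    ⟨m / 4, m % 4, Nat.mod_lt _ (by norm_num), by omega⟩
  interval_cases s
  · have h2 : (4 * q + 0 + 1) * (4 * q + 0) = 16 * (q * q) + 4 * q := by ring
    rw [h2] at h; rw [Nat.even_iff]; omega
  · have h2 : (4 * q + 1 + 1) * (4 * q + 1) = 16 * (q * q) + 12 * q + 2 := by ring
    rw [h2] at h; rw [Nat.even_iff]; omega
  · have h2 : (4 * q + 2 + 1) * (4 * q + 2) = 16 * (q * q) + 20 * q + 6 := by ring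
    rw [h2] at h; rw [Nat.even_iff]; omega
  · have h2 : (4 * q + 3 + 1) * (4 * q + 3) = 16 * (q * q) + 28 * q + 12 := by ring
    rw [h2] at h; rw [Nat.even_iff]; omega


lemma stdShuffle_val (k n : ℕ) (x : Fin (k * n)) :
    (stdShuffle k n x : ℕ) = k * ((x : ℕ) % n) + (x : ℕ) / n := rfl

lemma addMulLt {k n a b : ℕ} (ha : a < n) (hb : b < k) : a + b * n < k * n :=
  calc a + b * n < n + b * n := by omega
    _ = (b + 1) * n := by ring
    _ ≤ k * n := Nat.mul_le_mul_right n hb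

lemma inv_char' (k n a1 a2 b1 b2 : ℕ) (ha1 : a1 < n) (ha2 : a2 < n)
    (hb1 : b1 < k) (hb2 : b2 < k) :
    (n * b2 + a2 < n * b1 + a1 ∧ k * a1 + b1 ≤ k * a2 + b2) ↔ (a1 < a2 ∧ b2 < b1) := by
  constructor
  · rintro ⟨hlt, hle⟩
    have ha12 : a1 ≤ a2 := by
      by_contra hcon
      push_neg at hcon
      have h' : k * (a2 + 1) ≤ k * a1 := Nat.mul_le_mul_left k hcon
      rw [Nat.mul_succ] at h'
      omega
    have hane : a1 ≠ a2 := by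
      rintro rfl
      have hb12 : b2 < b1 := Nat.lt_of_mul_lt_mul_left (a := n) (by omega)
      have h' : n * (b2 + 1) ≤ n * b1 := Nat.mul_le_mul_left n hb12
      rw [Nat.mul_succ] at h'
      omega
    have ha : a1 < a2 := lt_of_le_of_ne ha12 hane
    exact ⟨ha, Nat.lt_of_mul_lt_mul_left (a := n) (by omega)⟩
  · rintro ⟨ha, hb⟩
    have h1 : n * (b2 + 1) ≤ n * b1 := Nat.mul_le_mul_left n hb
    have h2 : k * (a1 + 1) ≤ k * a2 := Nat.mul_le_mul_left k ha
    rw [Nat.mul_succ] at h1 h2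
    omega

lemma inv_char (k n : ℕ) (x1 x2 : ℕ) (h1 : x1 < k * n) (h2 : x2 < k * n) (hn : 0 < n) :
    (x2 < x1 ∧ k * (x1 % n) + x1 / n ≤ k * (x2 % n) + x2 / n) ↔
      (x1 % n < x2 % n ∧ x2 / n < x1 / n) := by
  have e1 : n * (x1 / n) + x1 % n = x1 := Nat.div_add_mod x1 n
  have e2 : n * (x2 / n) + x2 % n = x2 := Nat.div_add_mod x2 n
  have := inv_char' k n (x1 % n) (x2 % n) (x1 / n) (x2 / n)
    (Nat.mod_lt _ hn) (Nat.mod_lt _ hn)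
    ((Nat.div_lt_iff_lt_mul hn).mpr h1) ((Nat.div_lt_iff_lt_mul hn).mpr h2)
  rw [← this]
  constructor <;> rintro ⟨u, v⟩ <;> exact ⟨by omega, v⟩

lemma mySign_eq_signAux {N : ℕ} (f : Perm (Fin N)) : sign f = signAux f := by
  refine Equiv.Perm.swap_induction_on f (by simp [signAux_one]) ?_
  intro f x y hxy ih
  rw [Perm.sign_mul, signAux_mul, Perm.sign_swap hxy, signAux_swap hxy, ih]

lemma sign_stdShuffle (k n : ℕ) (hn : 0 < n) :
    sign (stdShuffle k n) =
      (-1 : ℤˣ) ^ (#(univ.filter fun p : Fin n × Fin n => p.1 < p.2) *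
        #(univ.filter fun q : Fin k × Fin k => q.1 < q.2)) := by
  rw [mySign_eq_signAux]
  unfold signAux
  rw [Finset.prod_ite (fun _ => (-1 : ℤˣ)) (fun _ => (1 : ℤˣ)), Finset.prod_const,
    Finset.prod_const_one, mul_one]
  congr 1
  rw [← Finset.card_product]
  refine Finset.card_bij'
    (fun x _ => ((⟨(x.1 : ℕ) % n, shuffleAux.mod_lt k n x.1⟩, ⟨(x.2 : ℕ) % n, shuffleAux.mod_lt k n x.2⟩),
      (⟨(x.2 : ℕ) / n, shuffleAux.div_lt k n x.2⟩, ⟨(x.1 : ℕ) / n, shuffleAux.div_lt k n x.1⟩)))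
    (fun p _ => ⟨⟨(p.1.1 : ℕ) + (p.2.2 : ℕ) * n, addMulLt p.1.1.isLt p.2.2.isLt⟩,
      ⟨(p.1.2 : ℕ) + (p.2.1 : ℕ) * n, addMulLt p.1.2.isLt p.2.1.isLt⟩⟩)
    ?_ ?_ ?_ ?_
  · rintro ⟨x1, x2⟩ hx
    rw [Finset.mem_filter, mem_finPairsLT] at hx
    obtain ⟨hlt, hle⟩ := hx
    rw [Fin.lt_def] at hlt
    rw [Fin.le_def, stdShuffle_val, stdShuffle_val] at hle
    have := (inv_char k n x1 x2 x1.isLt x2.isLt hn).mp ⟨hlt, hle⟩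
    simp only [Finset.mem_product, Finset.mem_filter, Finset.mem_univ, true_and, Fin.lt_def]
    exact ⟨this.1, this.2⟩
  · rintro ⟨⟨α1, α2⟩, ⟨β1, β2⟩⟩ hp
    simp only [Finset.mem_product, Finset.mem_filter, Finset.mem_univ, true_and, Fin.lt_def] at hp
    obtain ⟨hα, hβ⟩ := hp
    rw [Finset.mem_filter, mem_finPairsLT]
    have hm1 : ((α1 : ℕ) + (β2 : ℕ) * n) % n = (α1 : ℕ) := by
      rw [Nat.add_mul_mod_self_right, Nat.mod_eq_of_lt α1.isLt]
    have hm2 : ((α2 : ℕ) + (β1 : ℕ) * n) % n = (α2 : ℕ) := by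
      rw [Nat.add_mul_mod_self_right, Nat.mod_eq_of_lt α2.isLt]
    have hd1 : ((α1 : ℕ) + (β2 : ℕ) * n) / n = (β2 : ℕ) := by
      rw [Nat.add_mul_div_right _ _ hn, Nat.div_eq_of_lt α1.isLt, Nat.zero_add]
    have hd2 : ((α2 : ℕ) + (β1 : ℕ) * n) / n = (β1 : ℕ) := by
      rw [Nat.add_mul_div_right _ _ hn, Nat.div_eq_of_lt α2.isLt, Nat.zero_add]
    have key := (inv_char k n ((α1 : ℕ) + (β2 : ℕ) * n) ((α2 : ℕ) + (β1 : ℕ) * n)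
      (addMulLt α1.isLt β2.isLt) (addMulLt α2.isLt β1.isLt) hn).mpr
      (by rw [hm1, hm2, hd1, hd2]; exact ⟨hα, hβ⟩)
    refine ⟨?_, ?_⟩
    · rw [Fin.lt_def]; exact key.1
    · rw [Fin.le_def, stdShuffle_val, stdShuffle_val]; exact key.2
  · rintro ⟨x1, x2⟩ _
    have e1 : (x1 : ℕ) % n + (x1 : ℕ) / n * n = (x1 : ℕ) := Nat.mod_add_div' _ _
    have e2 : (x2 : ℕ) % n + (x2 : ℕ) / n * n = (x2 : ℕ) := Nat.mod_add_div' _ _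
    exact Sigma.ext (Fin.ext e1) (heq_of_eq (Fin.ext e2))
  · rintro ⟨⟨α1, α2⟩, ⟨β1, β2⟩⟩ _
    have hm1 : ((α1 : ℕ) + (β2 : ℕ) * n) % n = (α1 : ℕ) := by
      rw [Nat.add_mul_mod_self_right, Nat.mod_eq_of_lt α1.isLt]
    have hm2 : ((α2 : ℕ) + (β1 : ℕ) * n) % n = (α2 : ℕ) := by
      rw [Nat.add_mul_mod_self_right, Nat.mod_eq_of_lt α2.isLt]
    have hd1 : ((α1 : ℕ) + (β2 : ℕ) * n) / n = (β2 : ℕ) := by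
      rw [Nat.add_mul_div_right _ _ hn, Nat.div_eq_of_lt α1.isLt, Nat.zero_add]
    have hd2 : ((α2 : ℕ) + (β1 : ℕ) * n) / n = (β1 : ℕ) := by
      rw [Nat.add_mul_div_right _ _ hn, Nat.div_eq_of_lt α2.isLt, Nat.zero_add]
    simp only [Prod.mk.injEq, Fin.ext_iff]
    exact ⟨⟨hm1, hm2⟩, ⟨hd2, hd1⟩⟩

lemma sign_pilePerm (k n : ℕ) (hn : 0 < n) (τ : Perm (Fin k)) :
    sign (pilePerm k n τ) = sign τ ^ n := by
  have h := sign_eq_sign_of_equiv (pilePerm k n τ)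
      (Equiv.prodCongrLeft (fun _ : Fin n => τ)) finProdFinEquiv.symm ?_
  · rw [h, sign_prodCongrLeft]
    simp
  · intro x
    show ((pilePerm k n τ x).divNat, (pilePerm k n τ x).modNat) =
      Equiv.prodCongrLeft (fun _ : Fin n => τ) (x.divNat, x.modNat)
    rw [Equiv.prodCongrLeft_apply]
    have hval : (pilePerm k n τ x : ℕ) =
        (x : ℕ) % n + ((τ ⟨(x : ℕ) / n, shuffleAux.div_lt k n x⟩ : Fin k) : ℕ) * n := rfl
    have hm := shuffleAux.mod_lt k n x
    refine Prod.ext (Fin.ext ?_) (Fin.ext ?_)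
    · show (pilePerm k n τ x : ℕ) / n = _
      rw [hval, Nat.add_mul_div_right _ _ hn, Nat.div_eq_of_lt hm, Nat.zero_add]
      congr 1
    · show (pilePerm k n τ x : ℕ) % n = (x : ℕ) % n
      rw [hval, Nat.add_mul_mod_self_right, Nat.mod_eq_of_lt hm]

theorem shuffleGroup_le_alternating_iff (k n : ℕ) (hk : 2 ≤ k) (hn : 1 ≤ n) :
    shuffleGroup k n ≤ alternatingGroup (Fin (k * n)) ↔
      ((n % 4 = 2 ∧ (k % 4 = 0 ∨ k % 4 = 1)) ∨ n % 4 = 0) := by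
  have hn0 : 0 < n := hn
  unfold shuffleGroup
  rw [Subgroup.closure_le, Set.union_subset_iff, Set.singleton_subset_iff,
    Set.range_subset_iff]
  simp only [SetLike.mem_coe, Equiv.Perm.mem_alternatingGroup]
  rw [sign_stdShuffle k n hn0]
  have htau : (∀ τ : Perm (Fin k), sign (pilePerm k n τ) = 1) ↔ Even n := by
    constructor
    · intro h
      have h01 : (⟨0, by omega⟩ : Fin k) ≠ ⟨1, by omega⟩ := by simp [Fin.ext_iff]
      have hs := h (Equiv.swap ⟨0, by omega⟩ ⟨1, by omega⟩)
      rw [sign_pilePerm k n hn0, Equiv.Perm.sign_swap h01] at hs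
      by_contra hodd
      rw [Nat.not_even_iff_odd] at hodd
      rw [Odd.neg_one_pow hodd] at hs
      exact absurd hs (by decide)
    · intro he τ
      rw [sign_pilePerm k n hn0]
      obtain ⟨m, rfl⟩ := he
      rw [← two_mul, pow_mul, Int.units_sq, one_pow]
  set cN := #(univ.filter fun p : Fin n × Fin n => p.1 < p.2) with hcN
  set cK := #(univ.filter fun q : Fin k × Fin k => q.1 < q.2) with hcK
  have hN : 2 * cN = n * (n - 1) := twoMulCardLtPairs n
  have hK : 2 * cK = k * (k - 1) := twoMulCardLtPairs k
  have hEvN : Even cN ↔ (n % 4 = 0 ∨ n % 4 = 1) := by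
    have h := halfParity (n - 1) cN (by rw [hN]; congr 1 <;> omega)
    rwa [Nat.sub_add_cancel hn0] at h
  have hEvK : Even cK ↔ (k % 4 = 0 ∨ k % 4 = 1) := by
    have h := halfParity (k - 1) cK (by rw [hK]; congr 1 <;> omega)
    rwa [Nat.sub_add_cancel (by omega : 1 ≤ k)] at h
  have hsign : ((-1 : ℤˣ) ^ (cN * cK) = 1) ↔ Even (cN * cK) := by
    constructor
    · intro h
      by_contra hodd
      rw [Nat.not_even_iff_odd] at hodd
      rw [Odd.neg_one_pow hodd] at h
      exact absurd h (by decide)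
    · exact Even.neg_one_pow
  rw [hsign, htau, Nat.even_mul, hEvN, hEvK, Nat.even_iff]
  omega

end ShuffleProof
end

section
/- Let e ≥ 1 be an integer, let k = 4 and n = 2^{2e-1}, so that the deck has kn = 2^{2e+1} cards. Then the shuffle group G_{4, 2^{2e+1}} is isomorphic, as an abstract group, to the affine group of the (2e+1)-dimensional vector space over the field of two elements, i.e., to the group of invertible affine transformations of (ZMod 2)^{2e+1} (equivalently, to the semidirect product (ZMod 2)^{2e+1} ⋊ GL(2e+1, 2) with the natural action). -/
/-!
Take `n = 2e - 1` and write a position `x < 4 · 2ⁿ` in binary, least significant digit first,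
as a vector in `𝔽₂ⁿ⁺²`. The standard shuffle `x ↦ 4 (x mod 2ⁿ) + ⌊x / 2ⁿ⌋` rotates this vector
by two places, and `ρ_τ` applies a permutation of `𝔽₂²` to the two leading digits. Every
permutation of `𝔽₂²` is affine, so conjugation by the digit map embeds `G_{4, 4·2ⁿ}` into
`AGL(n + 2, 2)`.

Conversely, the pile permutations give the translation along the coordinate `n` and the
transvection between the coordinates `n` and `n + 1`. For odd `n`, `2` generates `ℤ/(n + 2)`, so
conjugating by the rotation yields all unit translations and all transvections between cyclically
adjacent coordinates; commutators of adjacent transvections give all elementary transvections,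
which generate `GL(n + 2, 2)`. Translations and `GL(n + 2, 2)` generate the affine group.
-/

namespace ShuffleGroup

section Transvection

variable {R ι : Type*} [CommRing R] [DecidableEq ι]

def elemTransvection {i j : ι} (h : i ≠ j) : (ι → R) ≃ₗ[R] (ι → R) :=
  LinearEquiv.transvection (f := LinearMap.proj i) (v := Pi.single j 1) (by simp [h])

lemma elemTransvection_apply {i j : ι} (h : i ≠ j) (x : ι → R) (k : ι) :
    elemTransvection h x k = x k + if k = j then x i else 0 := by
  simp [elemTransvection, LinearMap.transvection.apply, Pi.single_apply]

lemma funCongrLeft_mul_elemTransvection_mul_inv (e : ι ≃ ι) {i j : ι} (h : i ≠ j) :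
    LinearEquiv.funCongrLeft R R e * elemTransvection h * (LinearEquiv.funCongrLeft R R e)⁻¹ =
      elemTransvection (e.symm.injective.ne h) := by
  ext x k
  simp [LinearEquiv.funCongrLeft_apply, elemTransvection_apply, Equiv.eq_symm_apply]

lemma elemTransvection_commutator [CharP R 2] {a b c : ι} (hab : a ≠ b) (hbc : b ≠ c)
    (hac : a ≠ c) :
    elemTransvection hab * elemTransvection hbc * elemTransvection hab * elemTransvection hbc =
      (elemTransvection hac : (ι → R) ≃ₗ[R] (ι → R)) := by
  ext x k
  simp only [LinearEquiv.mul_apply, elemTransvection_apply]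
  have ha : x a + x a = 0 := CharTwo.add_self_eq_zero _
  have hb : x b + x b = 0 := CharTwo.add_self_eq_zero _
  split_ifs <;> grind

lemma toMatrix'_elemTransvection [Fintype ι] {i j : ι} (h : i ≠ j) :
    LinearMap.toMatrix' (elemTransvection h : (ι → R) ≃ₗ[R] (ι → R)).toLinearMap =
      Matrix.transvection j i 1 := by
  ext k l
  simp only [LinearMap.toMatrix'_apply, LinearEquiv.coe_coe, elemTransvection_apply,
    Pi.single_apply, Matrix.transvection, Matrix.add_apply, Matrix.one_apply, Matrix.single_apply]
  grind

theorem eq_top_of_elemTransvection_mem [Fintype ι]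
    {K : Subgroup ((ι → ZMod 2) ≃ₗ[ZMod 2] (ι → ZMod 2))}
    (hK : ∀ (i j : ι) (h : i ≠ j), elemTransvection h ∈ K) : K = ⊤ := by
  refine eq_top_iff.2 fun g _ => ?_
  obtain ⟨g', hg'K, hg'g⟩ : ∃ g' ∈ K,
      LinearMap.toMatrix' g'.toLinearMap = LinearMap.toMatrix' g.toLinearMap := by
    refine Matrix.diagonal_transvection_induction_of_det_ne_zero
      (fun M => ∃ g' ∈ K, LinearMap.toMatrix' g'.toLinearMap = M) _ ?_ ?_ ?_ ?_
    · rw [LinearMap.det_toMatrix']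
      exact (LinearEquiv.isUnit_det' g).ne_zero
    · intro D hD
      rw [Matrix.det_diagonal, Finset.prod_ne_zero_iff] at hD
      have hD1 : D = 1 := funext fun i => by
        have : ∀ a : ZMod 2, a ≠ 0 → a = 1 := by decide
        exact this _ (hD i (Finset.mem_univ i))
      exact ⟨1, K.one_mem, by simp [hD1]⟩
    · rintro ⟨i, j, hij, c⟩
      obtain rfl | rfl : c = 0 ∨ c = 1 := by decide +revert
      · exact ⟨1, K.one_mem, by simp [Matrix.TransvectionStruct.toMatrix]⟩
      · exact ⟨elemTransvection hij.symm, hK _ _ _, toMatrix'_elemTransvection _⟩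
    · rintro _ _ - - ⟨a, haK, rfl⟩ ⟨b, hbK, rfl⟩
      exact ⟨a * b, K.mul_mem haK hbK, LinearMap.toMatrix'_comp _ _⟩
  rwa [LinearEquiv.toLinearMap_injective (LinearMap.toMatrix'.injective hg'g)] at hg'K

end Transvection

section Affine

def toAffineEquivHom (k V : Type*) [Ring k] [AddCommGroup V] [Module k V] :
    (V ≃ₗ[k] V) →* (V ≃ᵃ[k] V) :=
  MonoidHom.mk' LinearEquiv.toAffineEquiv fun _ _ => rfl

def toPermHom (k V : Type*) [Ring k] [AddCommGroup V] [Module k V] :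
    (V ≃ᵃ[k] V) →* Equiv.Perm V :=
  MonoidHom.mk' AffineEquiv.toEquiv fun _ _ => rfl

variable {k V : Type*} [Ring k] [AddCommGroup V] [Module k V]

lemma toPermHom_injective : Function.Injective (toPermHom k V) :=
  AffineEquiv.toEquiv_injective

lemma eq_constVAdd_mul_linear (f : V ≃ᵃ[k] V) :
    f = AffineEquiv.constVAdd k V (f 0) * f.linear.toAffineEquiv := by
  ext v
  simpa [add_comm] using f.map_vadd 0 v

theorem eq_top_of_constVAdd_mem_of_linear_mem {H : Subgroup (V ≃ᵃ[k] V)}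
    (htrans : ∀ v, AffineEquiv.constVAdd k V v ∈ H) (hlin : ∀ g : V ≃ₗ[k] V, g.toAffineEquiv ∈ H) :
    H = ⊤ :=
  eq_top_iff.2 fun f _ => eq_constVAdd_mul_linear f ▸ H.mul_mem (htrans _) (hlin _)

lemma toAffineEquiv_mul_constVAdd_mul_inv (g : V ≃ₗ[k] V) (w : V) :
    g.toAffineEquiv * AffineEquiv.constVAdd k V w * g.toAffineEquiv⁻¹ =
      AffineEquiv.constVAdd k V (g w) := by
  ext v
  change g (w + g.symm v) = g w + v
  rw [map_add, g.apply_symm_apply]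

lemma constVAdd_mem_of_single_mem {ι : Type*} [Fintype ι] [DecidableEq ι]
    {H : Subgroup ((ι → ZMod 2) ≃ᵃ[ZMod 2] (ι → ZMod 2))}
    (h : ∀ i, AffineEquiv.constVAdd (ZMod 2) _ (Pi.single i 1) ∈ H) (v : ι → ZMod 2) :
    AffineEquiv.constVAdd (ZMod 2) _ v ∈ H := by
  let S := (Subgroup.toAddSubgroup' (H.comap (AffineEquiv.constVAddHom _ _))).toZModSubmodule 2
  have hS : S = ⊤ := by
    rw [eq_top_iff, ← (Pi.basisFun (ZMod 2) ι).span_eq, Submodule.span_le]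
    rintro _ ⟨i, rfl⟩
    simp only [Pi.basisFun_apply, SetLike.mem_coe]
    exact h i
  exact (hS ▸ Submodule.mem_top : v ∈ S)

noncomputable def affineEquivOfMapAdd {m : ℕ} {W : Type*} [AddCommGroup W] [Module (ZMod m) W]
    (g : W ≃ W) (hg : ∀ p q, g (p + q) + g 0 = g p + g q) : W ≃ᵃ[ZMod m] W :=
  AffineEquiv.ofBijective (φ := ⟨g, (AddMonoidHom.mk' (fun p => g p - g 0) fun p q => by
      rw [sub_add_sub_comm, ← hg]; abel).toZModLinearMap m,
    fun p v => by
      change g (v + p) = g v - g 0 + g p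
      rw [sub_add_eq_add_sub, ← hg, add_sub_cancel_right]⟩) g.bijective

lemma coe_affineEquivOfMapAdd {m : ℕ} {W : Type*} [AddCommGroup W] [Module (ZMod m) W]
    (g : W ≃ W) (hg : ∀ p q, g (p + q) + g 0 = g p + g q) :
    ⇑(affineEquivOfMapAdd (m := m) g hg) = g :=
  rfl

end Affine

section Rotation

lemma _root_.Fin.exists_nsmul_two_eq {n : ℕ} (hn : Odd n) (x : Fin (n + 2)) :
    ∃ t : ℕ, t • (2 : Fin (n + 2)) = x := by
  obtain ⟨k, rfl⟩ := hn
  -- `2 (k + 2) = n + 3 ≡ 1 (mod n + 2)`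
  refine ⟨(k + 2) * x, Fin.ext ?_⟩
  open Fin.CommRing in
  rw [nsmul_eq_mul, Fin.val_mul, Fin.val_natCast, Fin.val_two, Nat.mod_mul_mod,
    show (k + 2) * x * 2 = x + (2 * k + 1 + 2) * x by ring, Nat.add_mul_mod_self_left,
    Nat.mod_eq_of_lt x.isLt]

lemma _root_.Fin.exists_nsmul_one_eq {m : ℕ} [NeZero m] (x : Fin m) :
    ∃ t : ℕ, t • (1 : Fin m) = x := by
  refine ⟨x, ?_⟩
  open Fin.CommRing in
  rw [nsmul_one, Fin.cast_val_eq_self]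

lemma forall_of_step {G : Type*} [AddGroup G] {g : G} (hg : ∀ x, ∃ t : ℕ, t • g = x)
    {P : G → Prop} (c : G) (hc : P c) (hstep : ∀ x, P x → P (x + g)) (x : G) : P x := by
  have key (t : ℕ) : P (c + t • g) := by
    induction t with
    | zero => simpa using hc
    | succ t ih => simpa [succ_nsmul, add_assoc] using hstep _ ih
  obtain ⟨t, ht⟩ := hg (-c + x)
  simpa [ht] using key t

variable {n : ℕ}

def rotation (n : ℕ) : (Fin (n + 2) → ZMod 2) ≃ₗ[ZMod 2] (Fin (n + 2) → ZMod 2) :=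
  LinearEquiv.funCongrLeft _ _ (Equiv.subRight 2)

lemma rotation_apply (v : Fin (n + 2) → ZMod 2) (i : Fin (n + 2)) :
    rotation n v i = v (i - 2) :=
  rfl

lemma rotation_single (a : Fin (n + 2)) : rotation n (Pi.single a 1) = Pi.single (a + 2) 1 := by
  ext i
  simp [rotation_apply, Pi.single_apply, sub_eq_iff_eq_add]

theorem constVAdd_mem_of_rotation_mem (hn : Odd n)
    {H : Subgroup ((Fin (n + 2) → ZMod 2) ≃ᵃ[ZMod 2] (Fin (n + 2) → ZMod 2))}
    (hrot : (rotation n).toAffineEquiv ∈ H) {c : Fin (n + 2)}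
    (hc : AffineEquiv.constVAdd (ZMod 2) _ (Pi.single c 1) ∈ H) (v : Fin (n + 2) → ZMod 2) :
    AffineEquiv.constVAdd (ZMod 2) _ v ∈ H := by
  refine constVAdd_mem_of_single_mem (fun a => ?_) v
  refine forall_of_step (P := fun a => AffineEquiv.constVAdd (ZMod 2) _ (Pi.single a 1) ∈ H)
    (Fin.exists_nsmul_two_eq hn) c hc (fun a ha => ?_) a
  rw [← rotation_single, ← toAffineEquiv_mul_constVAdd_mul_inv]
  exact H.mul_mem (H.mul_mem hrot ha) (H.inv_mem hrot)

theorem eq_top_of_rotation_mem (hn : Odd n)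
    {K : Subgroup ((Fin (n + 2) → ZMod 2) ≃ₗ[ZMod 2] (Fin (n + 2) → ZMod 2))}
    (hrot : rotation n ∈ K) {c d : Fin (n + 2)} (hcd : c ≠ d) (hd : d = c + 1)
    (ht : elemTransvection hcd ∈ K) : K = ⊤ := by
  subst hd
  have hadj : ∀ a (h : a ≠ a + 1), elemTransvection h ∈ K := by
    refine forall_of_step (Fin.exists_nsmul_two_eq hn) c (fun _ => ht) (fun a ha h => ?_)
    have := K.mul_mem (K.mul_mem hrot (ha fun h' => h (by rw [add_right_comm, ← h'])))
      (K.inv_mem hrot)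
    rw [rotation, funCongrLeft_mul_elemTransvection_mul_inv] at this
    convert this using 2 <;> simp only [Equiv.subRight_symm_apply]
    abel
  refine eq_top_of_elemTransvection_mem fun a => ?_
  refine forall_of_step Fin.exists_nsmul_one_eq a (fun h => absurd rfl h) (fun b hb h => ?_)
  by_cases hab : a = b
  · subst hab
    exact hadj a h
  · have hb1 : b ≠ b + 1 := left_ne_add.2 one_ne_zero
    rw [← elemTransvection_commutator hab hb1 h]
    exact K.mul_mem (K.mul_mem (K.mul_mem (hb hab) (hadj b hb1)) (hb hab)) (hadj b hb1)

end Rotation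

section Digits

lemma stdShuffle_val (k n : ℕ) (x : Fin (k * n)) :
    (stdShuffle k n x : ℕ) = k * (x % n) + x / n :=
  rfl

lemma pilePerm_val_mod (k n : ℕ) (τ : Equiv.Perm (Fin k)) (x : Fin (k * n)) :
    (pilePerm k n τ x : ℕ) % n = x % n := by
  simp [pilePerm]

lemma pilePerm_val_div (k n : ℕ) (τ : Equiv.Perm (Fin k)) (x : Fin (k * n)) :
    (pilePerm k n τ x : ℕ) / n = τ ⟨x / n, shuffleAux.div_lt k n x⟩ := by
  have hn : 0 < n := (Nat.zero_le _).trans_lt (shuffleAux.mod_lt k n x)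
  simp [pilePerm, Nat.add_mul_div_right _ _ hn, Nat.div_eq_of_lt (shuffleAux.mod_lt k n x)]

lemma testBit_four_mul_mod_add_div {a i : ℕ} (n : ℕ) (ha : a / 2 ^ n < 4) (hi : i < n + 2) :
    (4 * (a % 2 ^ n) + a / 2 ^ n).testBit i = a.testBit (if i < 2 then i + n else i - 2) := by
  rw [show 4 = 2 ^ 2 from rfl, Nat.testBit_two_pow_mul_add _ ha]
  split_ifs with hi2
  · rw [Nat.testBit_div_two_pow]
  · rw [Nat.testBit_mod_two_pow, decide_eq_true (by omega : i - 2 < n), Bool.true_and]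

lemma _root_.Fin.val_sub_two {n : ℕ} (i : Fin (n + 2)) :
    ((i - 2 : Fin (n + 2)) : ℕ) = if (i : ℕ) < 2 then i + n else i - 2 := by
  rw [Fin.val_sub]
  rcases n with _ | n
  · fin_cases i <;> rfl
  · rw [Fin.val_two]
    split_ifs with h
    · rw [Nat.mod_eq_of_lt (by omega)]
      omega
    · rw [show n + 1 + 2 - 2 + i = (i - 2) + (n + 1 + 2) by omega, Nat.add_mod_right,
        Nat.mod_eq_of_lt (by omega)]

def binaryDigits (k : ℕ) : Fin (2 ^ k) ≃ (Fin k → ZMod 2) :=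
  finFunctionFinEquiv.symm

lemma binaryDigits_apply {k : ℕ} (x : Fin (2 ^ k)) (i : Fin k) :
    binaryDigits k x i = (((x : ℕ).testBit i).toNat : ZMod 2) := by
  apply ZMod.val_injective
  rw [ZMod.val_natCast, Nat.toNat_testBit, Nat.mod_mod]
  exact finFunctionFinEquiv_symm_apply_val x i

variable {n : ℕ}

def deckDigits (n : ℕ) : Fin (4 * 2 ^ n) ≃ (Fin (n + 2) → ZMod 2) :=
  (finCongr (by ring)).trans (binaryDigits (n + 2))

lemma deckDigits_apply (x : Fin (4 * 2 ^ n)) (i : Fin (n + 2)) :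
    deckDigits n x i = (((x : ℕ).testBit i).toNat : ZMod 2) :=
  binaryDigits_apply _ i

lemma deckDigits_stdShuffle (x : Fin (4 * 2 ^ n)) :
    deckDigits n (stdShuffle 4 (2 ^ n) x) = rotation n (deckDigits n x) := by
  ext i
  rw [rotation_apply, deckDigits_apply, deckDigits_apply, stdShuffle_val,
    testBit_four_mul_mod_add_div n (shuffleAux.div_lt 4 _ x) i.isLt, Fin.val_sub_two]

def splitDigits (R : Type*) [CommRing R] (a b : ℕ) :
    (Fin (a + b) → R) ≃ₗ[R] (Fin a → R) × (Fin b → R) :=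
  (LinearEquiv.funCongrLeft R R finSumFinEquiv).trans (LinearEquiv.sumArrowLequivProdArrow _ _ R R)

@[simp] lemma splitDigits_fst {R : Type*} [CommRing R] {a b : ℕ} (v : Fin (a + b) → R)
    (i : Fin a) : (splitDigits R a b v).1 i = v (Fin.castAdd b i) :=
  rfl

@[simp] lemma splitDigits_snd {R : Type*} [CommRing R] {a b : ℕ} (v : Fin (a + b) → R)
    (j : Fin b) : (splitDigits R a b v).2 j = v (Fin.natAdd a j) :=
  rfl

lemma splitDigits_deckDigits (x : Fin (4 * 2 ^ n)) :
    splitDigits _ n 2 (deckDigits n x) =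
      (binaryDigits n ⟨x % 2 ^ n, Nat.mod_lt _ (by positivity)⟩,
        binaryDigits 2 (⟨x / 2 ^ n, shuffleAux.div_lt 4 _ x⟩ : Fin (2 ^ 2))) := by
  ext i
  · simp [deckDigits_apply, binaryDigits_apply, Nat.testBit_mod_two_pow]
  · refine (deckDigits_apply _ _).trans (Eq.trans ?_ (binaryDigits_apply _ i).symm)
    simp [Nat.testBit_div_two_pow, add_comm]

lemma splitDigits_single_natAdd (j : Fin 2) :
    splitDigits (ZMod 2) n 2 (Pi.single (Fin.natAdd n j) 1) = (0, Pi.single j 1) := by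
  ext i
  · simp only [splitDigits_fst, Pi.zero_apply]
    exact Pi.single_eq_of_ne (Fin.ne_of_val_ne (by rw [Fin.val_castAdd, Fin.val_natAdd]; omega)) _
  · simp [Pi.single_apply, Fin.ext_iff]

end Digits

section Piles

def pairPerm (τ : Equiv.Perm (Fin 4)) : Equiv.Perm (Fin 2 → ZMod 2) :=
  (binaryDigits 2).permCongr τ

-- Every permutation of `𝔽₂²` is affine: `Sym 4 = AGL(2, 2)`.
lemma pairPerm_add_add (τ : Equiv.Perm (Fin 4)) (p q : Fin 2 → ZMod 2) :
    pairPerm τ (p + q) + pairPerm τ 0 = pairPerm τ p + pairPerm τ q := by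
  revert τ p q
  decide +kernel

lemma pairPerm_swap_mul_swap (w : Fin 2 → ZMod 2) :
    pairPerm (Equiv.swap 0 1 * Equiv.swap 2 3) w = Pi.single 0 1 + w := by
  revert w
  decide +kernel

lemma pairPerm_swap (w : Fin 2 → ZMod 2) :
    pairPerm (Equiv.swap 1 3) w = elemTransvection (zero_ne_one : (0 : Fin 2) ≠ 1) w := by
  revert w
  decide +kernel

variable {n : ℕ}

noncomputable def pileAffine (n : ℕ) (τ : Equiv.Perm (Fin 4)) :
    (Fin (n + 2) → ZMod 2) ≃ᵃ[ZMod 2] (Fin (n + 2) → ZMod 2) :=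
  (splitDigits _ n 2).toAffineEquiv.trans <|
    ((AffineEquiv.refl _ _).prodCongr (affineEquivOfMapAdd (pairPerm τ) (pairPerm_add_add τ))).trans
      (splitDigits _ n 2).symm.toAffineEquiv

lemma splitDigits_pileAffine (τ : Equiv.Perm (Fin 4)) (v : Fin (n + 2) → ZMod 2) :
    splitDigits _ n 2 (pileAffine n τ v) =
      ((splitDigits _ n 2 v).1, pairPerm τ (splitDigits _ n 2 v).2) := by
  simp [pileAffine, coe_affineEquivOfMapAdd]

lemma deckDigits_pilePerm (τ : Equiv.Perm (Fin 4)) (x : Fin (4 * 2 ^ n)) :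
    deckDigits n (pilePerm 4 (2 ^ n) τ x) = pileAffine n τ (deckDigits n x) := by
  apply (splitDigits _ n 2).injective
  rw [splitDigits_pileAffine, splitDigits_deckDigits, splitDigits_deckDigits]
  simp only [pilePerm_val_mod, pilePerm_val_div, pairPerm, Equiv.permCongr_apply,
    Equiv.symm_apply_apply]

lemma pileAffine_swap_mul_swap :
    pileAffine n (Equiv.swap 0 1 * Equiv.swap 2 3) =
      AffineEquiv.constVAdd (ZMod 2) _ (Pi.single (Fin.natAdd n 0) 1) := by
  ext v : 1
  apply (splitDigits _ n 2).injective
  rw [splitDigits_pileAffine, pairPerm_swap_mul_swap, AffineEquiv.constVAdd_apply, vadd_eq_add,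
    map_add, splitDigits_single_natAdd]
  ext i <;> simp

lemma natAdd_ne_natAdd_one : Fin.natAdd n (0 : Fin 2) ≠ Fin.natAdd n 1 :=
  Fin.ne_of_val_ne (by simp)

lemma natAdd_one_eq : Fin.natAdd n (1 : Fin 2) = Fin.natAdd n 0 + 1 := by
  ext
  rw [Fin.val_add_one_of_lt (by simp [Fin.lt_def])]
  simp

lemma pileAffine_swap :
    pileAffine n (Equiv.swap 1 3) = (elemTransvection natAdd_ne_natAdd_one).toAffineEquiv := by
  ext v : 1
  apply (splitDigits _ n 2).injective
  rw [splitDigits_pileAffine, pairPerm_swap]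
  ext i
  · simp only [splitDigits_fst, LinearEquiv.coe_toAffineEquiv, elemTransvection_apply]
    rw [if_neg (Fin.ne_of_val_ne (by rw [Fin.val_castAdd, Fin.val_natAdd]; omega)), add_zero]
  · simp [elemTransvection_apply, Fin.ext_iff]

end Piles

variable {n : ℕ}

lemma permCongr_stdShuffle :
    (deckDigits n).permCongr (stdShuffle 4 (2 ^ n)) = (rotation n).toAffineEquiv.toEquiv :=
  Equiv.ext fun v => by simp [Equiv.permCongr_apply, deckDigits_stdShuffle]

lemma permCongr_pilePerm (τ : Equiv.Perm (Fin 4)) :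
    (deckDigits n).permCongr (pilePerm 4 (2 ^ n) τ) = (pileAffine n τ).toEquiv :=
  Equiv.ext fun v => by simp [Equiv.permCongr_apply, deckDigits_pilePerm]

theorem closure_rotation_pileAffine (hn : Odd n) :
    Subgroup.closure ({(rotation n).toAffineEquiv} ∪ Set.range (pileAffine n)) = ⊤ := by
  set H := Subgroup.closure ({(rotation n).toAffineEquiv} ∪ Set.range (pileAffine n))
  have hrot : (rotation n).toAffineEquiv ∈ H := Subgroup.subset_closure (Or.inl rfl)
  have hpile (τ) : pileAffine n τ ∈ H := Subgroup.subset_closure (Or.inr ⟨τ, rfl⟩)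
  have hlin : H.comap (toAffineEquivHom _ _) = ⊤ :=
    eq_top_of_rotation_mem hn hrot natAdd_ne_natAdd_one natAdd_one_eq <| by
      change (elemTransvection _).toAffineEquiv ∈ H
      rw [← pileAffine_swap]
      exact hpile _
  refine eq_top_of_constVAdd_mem_of_linear_mem
    (constVAdd_mem_of_rotation_mem hn hrot (pileAffine_swap_mul_swap ▸ hpile _)) fun g => ?_
  exact (hlin ▸ Subgroup.mem_top g : g ∈ H.comap (toAffineEquivHom _ _))

theorem map_shuffleGroup (hn : Odd n) :
    (shuffleGroup 4 (2 ^ n)).map (deckDigits n).permCongrHom.toMonoidHom =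
      (toPermHom (ZMod 2) _).range := by
  rw [shuffleGroup, MonoidHom.map_closure, MonoidHom.range_eq_map,
    ← closure_rotation_pileAffine hn, MonoidHom.map_closure, Set.image_union, Set.image_union,
    Set.image_singleton, Set.image_singleton, ← Set.range_comp, ← Set.range_comp]
  congr 3
  · exact permCongr_stdShuffle
  · exact funext permCongr_pilePerm

noncomputable def shuffleGroupMulEquiv (hn : Odd n) :
    shuffleGroup 4 (2 ^ n) ≃* ((Fin (n + 2) → ZMod 2) ≃ᵃ[ZMod 2] (Fin (n + 2) → ZMod 2)) :=
  (((deckDigits n).permCongrHom.subgroupMap _).trans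
    (MulEquiv.subgroupCongr (map_shuffleGroup hn))).trans
      (MonoidHom.ofInjective toPermHom_injective).symm

end ShuffleGroup

theorem shuffleGroup_four_iso_affine (e : ℕ) (he : 1 ≤ e) :
    Nonempty ((shuffleGroup 4 (2 ^ (2 * e - 1))) ≃*
      ((Fin (2 * e + 1) → ZMod 2) ≃ᵃ[ZMod 2] (Fin (2 * e + 1) → ZMod 2))) := by
  rw [show 2 * e + 1 = 2 * e - 1 + 2 by omega]
  exact ⟨ShuffleGroup.shuffleGroupMulEquiv (Nat.odd_iff.2 (by omega))⟩
end

section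
/- Let k ≥ 3 and e ≥ 0 be integers and let n = k^e, so the deck has k^{e+1} cards. Identify each x ∈ [k^{e+1}] with its base-k digit sequence (d_0(x), ..., d_e(x)), where d_i(x) = ⌊x/k^i⌋ mod k. Then the shuffle group G_{k, k^{e+1}} consists exactly of those permutations g of [k^{e+1}] for which there exist r ∈ Z/(e+1)Z and permutations τ_0, ..., τ_e of [k] such that for every x ∈ [k^{e+1}] and every i ∈ {0, ..., e}, the i-th base-k digit of g(x) equals τ_i(d_{(i+r) mod (e+1)}(x)). (That is, G_{k,k^{e+1}} is the primitive wreath product of Sym([k]) by the cyclic group of order e+1, in its product action on digit sequences.) -/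
/-! Read a position `x` as its base-`k` digit vector `(d₀(x), …, d_e(x))`. The standard shuffle
then rotates the digits cyclically, and `ρ_τ` applies `τ` to the top digit `d_e` (the pile index)
while fixing the others. Conjugating `ρ_τ` by powers of the rotation applies `τ` to any single
digit, and such permutations of single digits generate all coordinatewise permutations; together
with the rotations they form exactly the wreath product `Sym([k]) ≀ C_{e+1}` in its product
action. -/

open Equiv

section ProductWreath

variable {ι α : Type*}

@[simps]
def piPermHom : (ι → Perm α) →* Perm (ι → α) where
  toFun := Equiv.piCongrRight
  map_one' := rfl
  map_mul' _ _ := rfl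

variable [AddGroup ι]

@[simps]
def shiftPerm (r : ι) : Perm (ι → α) where
  toFun f i := f (i + r)
  invFun f i := f (i - r)
  left_inv f := by simp
  right_inv f := by simp

lemma shiftPerm_zero : shiftPerm (0 : ι) = (1 : Perm (ι → α)) := by
  ext; simp

lemma shiftPerm_add (r s : ι) :
    shiftPerm (r + s) = (shiftPerm r * shiftPerm s : Perm (ι → α)) := by
  ext; simp [add_assoc]

lemma shiftPerm_neg (r : ι) : shiftPerm (-r) = (shiftPerm r : Perm (ι → α))⁻¹ := by
  rw [eq_inv_iff_mul_eq_one, ← shiftPerm_add, neg_add_cancel, shiftPerm_zero]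

lemma shiftPerm_nsmul (n : ℕ) (r : ι) :
    shiftPerm (n • r) = (shiftPerm r ^ n : Perm (ι → α)) := by
  induction n with
  | zero => simp [shiftPerm_zero]
  | succ n ih => rw [succ_nsmul, shiftPerm_add, ih, pow_succ]

lemma shiftPerm_mul_piPermHom (r : ι) (τ : ι → Perm α) :
    shiftPerm r * piPermHom τ = piPermHom (fun i => τ (i + r)) * shiftPerm r := by
  ext; simp

variable (ι α) in
/-- The wreath product `Perm α ≀ ι` in its product action on `ι → α`: the permutations
`f ↦ (i ↦ τ i (f (i + r)))`. -/
def productWreath : Subgroup (Perm (ι → α)) where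
  carrier := {p | ∃ r τ, p = piPermHom τ * shiftPerm r}
  one_mem' := ⟨0, 1, by rw [map_one, shiftPerm_zero, one_mul]⟩
  mul_mem' := by
    rintro _ _ ⟨r, τ, rfl⟩ ⟨s, υ, rfl⟩
    refine ⟨r + s, τ * fun i => υ (i + r), ?_⟩
    rw [map_mul, shiftPerm_add, mul_assoc, ← mul_assoc (shiftPerm r), shiftPerm_mul_piPermHom]
    group
  inv_mem' := by
    rintro _ ⟨r, τ, rfl⟩
    refine ⟨-r, fun i => (τ (i - r))⁻¹, ?_⟩
    rw [mul_inv_rev, ← shiftPerm_neg, ← map_inv, shiftPerm_mul_piPermHom]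
    simp [sub_eq_add_neg]

lemma mem_productWreath {p : Perm (ι → α)} :
    p ∈ productWreath ι α ↔ ∃ r τ, p = piPermHom τ * shiftPerm r := Iff.rfl

lemma closure_shiftPerm_union_mulSingle [Finite ι] [DecidableEq ι] (i₀ : ι) :
    Subgroup.closure (Set.range shiftPerm ∪ Set.range fun t => piPermHom (Pi.mulSingle i₀ t)) =
      productWreath ι α := by
  set H :=
    Subgroup.closure (Set.range shiftPerm ∪ Set.range fun t => piPermHom (Pi.mulSingle i₀ t))
  apply le_antisymm
  · rw [Subgroup.closure_le]
    rintro _ (⟨r, rfl⟩ | ⟨t, rfl⟩)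
    · exact ⟨r, 1, by rw [map_one, one_mul]⟩
    · exact ⟨0, _, by rw [shiftPerm_zero, mul_one]⟩
  have shift_mem (r : ι) : (shiftPerm r : Perm (ι → α)) ∈ H :=
    Subgroup.subset_closure (Or.inl ⟨r, rfl⟩)
  have mulSingle_mem (i : ι) (t : Perm α) : Pi.mulSingle i t ∈ H.comap piPermHom := by
    have hconj : piPermHom (Pi.mulSingle i t) =
        shiftPerm (-i + i₀) * piPermHom (Pi.mulSingle i₀ t) * (shiftPerm (-i + i₀))⁻¹ := by
      rw [shiftPerm_mul_piPermHom, mul_inv_cancel_right]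
      congr 1; ext j : 1
      simp only [Pi.mulSingle_apply, ← eq_sub_iff_add_eq, sub_eq_add_neg, neg_add_rev, neg_neg,
        add_neg_cancel_left]
    rw [Subgroup.mem_comap, hconj]
    exact mul_mem (mul_mem (shift_mem _) (Subgroup.subset_closure (Or.inr ⟨t, rfl⟩)))
      (inv_mem (shift_mem _))
  have := Fintype.ofFinite ι
  rintro _ ⟨r, τ, rfl⟩
  refine mul_mem ?_ (shift_mem r)
  rw [← Finset.noncommProd_mulSingle τ]
  exact Subgroup.noncommProd_mem _ _ fun i _ => mulSingle_mem i (τ i)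

end ProductWreath

open Fin.CommRing in
lemma shiftPerm_mem_zpowers_neg_one {α : Type*} {n : ℕ} (r : Fin (n + 1)) :
    shiftPerm r ∈ Subgroup.zpowers (shiftPerm (-1) : Perm (Fin (n + 1) → α)) := by
  have hr : (-r : Fin (n + 1)).val • (-1 : Fin (n + 1)) = r := by
    rw [nsmul_eq_mul, Fin.cast_val_eq_self, mul_neg_one, neg_neg]
  rw [← hr, shiftPerm_nsmul]
  exact Subgroup.npow_mem_zpowers _ _

lemma closure_shiftPerm_neg_one_union_mulSingle {α : Type*} {n : ℕ} (i₀ : Fin (n + 1)) :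
    Subgroup.closure ({shiftPerm (-1)} ∪ Set.range fun t => piPermHom (Pi.mulSingle i₀ t)) =
      productWreath (Fin (n + 1)) α := by
  rw [← closure_shiftPerm_union_mulSingle i₀, Subgroup.closure_union, Subgroup.closure_union,
    ← Subgroup.zpowers_eq_closure]
  congr 1
  refine le_antisymm ?_ ((Subgroup.closure_le _).mpr ?_)
  · exact Subgroup.zpowers_le.mpr (Subgroup.subset_closure ⟨-1, rfl⟩)
  · rintro _ ⟨r, rfl⟩
    exact shiftPerm_mem_zpowers_neg_one r

namespace Nat

lemma mul_add_div_pow_succ_mod {k a b : ℕ} (hb : b < k) (i : ℕ) :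
    (k * a + b) / k ^ (i + 1) % k = a / k ^ i % k := by
  rw [pow_succ', ← Nat.div_div_eq_div_mul, Nat.mul_add_div (by omega), Nat.div_eq_of_lt hb,
    add_zero]

lemma mod_pow_div_pow_mod {k x i e : ℕ} (hi : i < e) : x % k ^ e / k ^ i % k = x / k ^ i % k := by
  rw [← Nat.mod_mul_right_div_self, ← Nat.mod_mul_right_div_self,
    Nat.mod_mod_of_dvd x (by rw [← pow_succ]; exact pow_dvd_pow k hi)]

lemma add_mul_pow_div_pow_mod {k a c i e : ℕ} (hi : i < e) :
    (a + c * k ^ e) / k ^ i % k = a / k ^ i % k := by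
  obtain ⟨m, rfl⟩ : ∃ m, e = i + m + 1 := ⟨e - i - 1, by omega⟩
  rcases k.eq_zero_or_pos with rfl | hk
  · simp
  rw [show c * k ^ (i + m + 1) = c * k ^ m * k * k ^ i by ring,
    Nat.add_mul_div_right _ _ (pow_pos hk i), Nat.add_mul_mod_self_right]

end Nat

section Digits

variable {k e : ℕ}

variable (k e) in
def digitEquiv : Fin (k * k ^ e) ≃ (Fin (e + 1) → Fin k) :=
  (finCongr (pow_succ' k e).symm).trans finFunctionFinEquiv.symm

@[simp]
lemma digitEquiv_apply_val (x : Fin (k * k ^ e)) (i : Fin (e + 1)) :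
    (digitEquiv k e x i : ℕ) = x / k ^ (i : ℕ) % k :=
  rfl

lemma digitEquiv_stdShuffle (x : Fin (k * k ^ e)) :
    digitEquiv k e (stdShuffle k (k ^ e) x) = shiftPerm (-1) (digitEquiv k e x) := by
  have hx := shuffleAux.div_lt k (k ^ e) x
  have hσx : (stdShuffle k (k ^ e) x : ℕ) = k * (x % k ^ e) + x / k ^ e := by simp [stdShuffle]
  ext i
  simp only [digitEquiv_apply_val, shiftPerm_apply, hσx]
  cases i using Fin.cases with
  | zero =>
    rw [zero_add, Fin.coe_neg_one, Fin.val_zero, pow_zero, Nat.div_one, Nat.mul_add_mod,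
      Nat.mod_eq_of_lt hx]
  | succ j =>
    have hj : ((j.succ + -1 : Fin (e + 1)) : ℕ) = j := by
      rw [Fin.val_add, Fin.coe_neg_one, Fin.val_succ,
        show (j : ℕ) + 1 + e = j + (e + 1) by omega, Nat.add_mod_right,
        Nat.mod_eq_of_lt (by omega)]
    rw [hj, Fin.val_succ, Nat.mul_add_div_pow_succ_mod hx, Nat.mod_pow_div_pow_mod j.isLt]

lemma digitEquiv_pilePerm (τ : Perm (Fin k)) (x : Fin (k * k ^ e)) :
    digitEquiv k e (pilePerm k (k ^ e) τ x) =
      piPermHom (Pi.mulSingle (Fin.last e) τ) (digitEquiv k e x) := by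
  set top : Fin k := ⟨x / k ^ e, shuffleAux.div_lt k (k ^ e) x⟩
  have hx := shuffleAux.mod_lt k (k ^ e) x
  have hρx : (pilePerm k (k ^ e) τ x : ℕ) = x % k ^ e + τ top * k ^ e := by
    simp [pilePerm, top]
  ext i
  simp only [digitEquiv_apply_val, piPermHom_apply, Equiv.piCongrRight_apply, Pi.map_apply, hρx]
  cases i using Fin.lastCases with
  | last =>
    have htop : digitEquiv k e x (Fin.last e) = top :=
      Fin.ext (Nat.mod_eq_of_lt (shuffleAux.div_lt k (k ^ e) x))
    rw [Pi.mulSingle_eq_same, htop, Fin.val_last,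
      Nat.add_mul_div_right _ _ (Nat.zero_lt_of_lt hx), Nat.div_eq_of_lt hx, zero_add,
      Nat.mod_eq_of_lt (τ top).isLt]
  | cast j =>
    rw [Pi.mulSingle_eq_of_ne (Fin.castSucc_ne_last j), Perm.one_apply, digitEquiv_apply_val,
      Fin.val_castSucc, Nat.add_mul_pow_div_pow_mod j.isLt, Nat.mod_pow_div_pow_mod j.isLt]

lemma map_shuffleGroup_digitEquiv :
    (shuffleGroup k (k ^ e)).map (digitEquiv k e).permCongrHom.toMonoidHom =
      productWreath (Fin (e + 1)) (Fin k) := by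
  have hσ : (digitEquiv k e).permCongr (stdShuffle k (k ^ e)) = shiftPerm (-1) := by
    ext1 f
    rw [permCongr_apply, digitEquiv_stdShuffle, apply_symm_apply]
  have hρ (τ : Perm (Fin k)) : (digitEquiv k e).permCongr (pilePerm k (k ^ e) τ) =
      piPermHom (Pi.mulSingle (Fin.last e) τ) := by
    ext1 f
    rw [permCongr_apply, digitEquiv_pilePerm, apply_symm_apply]
  rw [shuffleGroup, MonoidHom.map_closure, Set.image_union, Set.image_singleton,
    ← Set.range_comp, ← closure_shiftPerm_neg_one_union_mulSingle (Fin.last e)]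
  simp only [MulEquiv.coe_toMonoidHom, permCongrHom_coe, Function.comp_def, hσ, hρ]

end Digits

theorem shuffleGroup_eq_wreath (k e : ℕ) (hk : 3 ≤ k) :
    (shuffleGroup k (k ^ e) : Set (Equiv.Perm (Fin (k * k ^ e)))) =
      {g : Equiv.Perm (Fin (k * k ^ e)) |
        ∃ (r : Fin (e + 1)) (τ : Fin (e + 1) → Equiv.Perm (Fin k)),
          ∀ (x : Fin (k * k ^ e)) (i : Fin (e + 1)),
            ((g x : ℕ) / k ^ (i : ℕ)) % k =
              ((τ i) ⟨((x : ℕ) / k ^ (((i + r : Fin (e + 1))) : ℕ)) % k,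
                Nat.mod_lt _ (by omega)⟩ : ℕ)} := by
  ext g
  rw [SetLike.mem_coe, ← Subgroup.mem_map_iff_mem (f := (digitEquiv k e).permCongrHom.toMonoidHom)
    (digitEquiv k e).permCongrHom.injective, map_shuffleGroup_digitEquiv, mem_productWreath]
  refine exists_congr fun r => exists_congr fun τ => ?_
  rw [MulEquiv.coe_toMonoidHom, permCongrHom_coe, Equiv.ext_iff,
    (digitEquiv k e).symm.forall_congr_left]
  simp only [permCongr_apply, symm_symm, symm_apply_apply, funext_iff, Fin.ext_iff,
    digitEquiv_apply_val, Perm.mul_apply, piPermHom_apply, piCongrRight_apply, Pi.map_apply,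
    shiftPerm_apply]
  rfl
end

section
/- Let n = 3^s·t where s ≥ 1, t > 1 and 3 ∤ t. Then every x ∈ {0, 1, ..., t−1} lies in the H-orbit of 0. -/
/-- For `k = 3`, the subgroup `H = ⟨σ, ρ_{(01)}⟩` of `Sym([3n])`, where `(01)` is the
transposition of `Sym([3])` swapping `0` and `1`. -/
noncomputable def shuffleH (n : ℕ) : Subgroup (Equiv.Perm (Fin (3 * n))) :=
  Subgroup.closure {stdShuffle 3 n, pilePerm 3 n (Equiv.swap 0 1)}

/-!
For `v < n` the generators act on small positions by `σ v = 3v`, `ρ v = v + n` and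
`σ (v + n) = 3v + 1`, so the orbit of `0` is closed under `v ↦ 3v` and contains `3w` exactly when
it contains `3w + 1`. Writing `n = 3m`, the identity `3(p + m) = 3p + n` shows that `p` and
`p + m` lie in the same orbit, and rescaling by `3 ^ (s - 1)` turns this into: `u` and `u + t` lie
in the same orbit for `u < t`. Since `3 ∤ t`, adding `t` changes the residue mod 3, and a strong
induction on `x < t` along these moves reaches `0`.
-/

theorem forall_lt_mem_of_closed {S : Set ℕ} {t : ℕ} (h3t : ¬ 3 ∣ t) (hzero : 0 ∈ S)
    (hmul : ∀ v < t, v ∈ S → 3 * v ∈ S) (hadj : ∀ w < t, 3 * w ∈ S ↔ 3 * w + 1 ∈ S)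
    (hshift : ∀ u < t, u + t ∈ S ↔ u ∈ S) : ∀ x < t, x ∈ S := by
  intro x
  induction x using Nat.strong_induction_on with
  | _ x ih =>
    intro hx
    obtain rfl | hx0 := Nat.eq_zero_or_pos x
    · exact hzero
    have hthird : x / 3 ∈ S := ih _ (by omega) (by omega)
    obtain h0 | h1 | h2 : x % 3 = 0 ∨ x % 3 = 1 ∨ x % 3 = 2 := by omega
    · rw [show x = 3 * (x / 3) by omega]
      exact hmul _ (by omega) hthird
    · rw [show x = 3 * (x / 3) + 1 by omega]
      exact (hadj _ (by omega)).mp (hmul _ (by omega) hthird)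
    rw [← hshift x hx]
    obtain ht1 | ht2 : t % 3 = 1 ∨ t % 3 = 2 := by omega
    · -- here `x + t ≡ 0` and `x + 1 ≡ 0`, with `x + 1 < t`
      have hsucc : x + 1 ∈ S := by
        rw [show x + 1 = 3 * ((x + 1) / 3) by omega]
        exact hmul _ (by omega) (ih _ (by omega) (by omega))
      rw [show x + t = 3 * ((x + t) / 3) by omega, hadj _ (by omega),
        show 3 * ((x + t) / 3) + 1 = (x + 1) + t by omega, hshift _ (by omega)]
      exact hsucc
    · rw [show x + t = 3 * ((x - 1 + t) / 3) + 1 by omega, ← hadj _ (by omega),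
        show 3 * ((x - 1 + t) / 3) = (x - 1) + t by omega, hshift _ (by omega)]
      exact ih _ (by omega) (by omega)

theorem stdShuffle_apply_val (k n : ℕ) (x : Fin (k * n)) :
    (stdShuffle k n x : ℕ) = k * (x % n) + x / n :=
  rfl

theorem pilePerm_apply_val (k n : ℕ) (τ : Equiv.Perm (Fin k)) (x : Fin (k * n)) :
    (pilePerm k n τ x : ℕ) = x % n + (τ ⟨x / n, shuffleAux.div_lt k n x⟩ : ℕ) * n :=
  rfl

namespace shuffleH

variable {n : ℕ}

theorem stdShuffle_mem : stdShuffle 3 n ∈ shuffleH n :=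
  Subgroup.subset_closure (Set.mem_insert _ _)

theorem pilePerm_swap_mem : pilePerm 3 n (Equiv.swap 0 1) ∈ shuffleH n :=
  Subgroup.subset_closure (Set.mem_insert_of_mem _ rfl)

def zeroOrbit (n : ℕ) : Set ℕ :=
  {v | ∃ g ∈ shuffleH n, ∃ a : Fin (3 * n), (a : ℕ) = 0 ∧ (g a : ℕ) = v}

theorem zero_mem_zeroOrbit (hn : 0 < n) : 0 ∈ zeroOrbit n :=
  ⟨1, one_mem _, ⟨0, by omega⟩, rfl, rfl⟩

theorem apply_mem_zeroOrbit_iff {g : Equiv.Perm (Fin (3 * n))} (hg : g ∈ shuffleH n)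
    (a : Fin (3 * n)) : (g a : ℕ) ∈ zeroOrbit n ↔ (a : ℕ) ∈ zeroOrbit n := by
  constructor
  · rintro ⟨g', hg', z, hz, hga⟩
    refine ⟨g⁻¹ * g', mul_mem (inv_mem hg) hg', z, hz, ?_⟩
    rw [Equiv.Perm.mul_apply, Fin.ext hga, Equiv.Perm.inv_def, Equiv.symm_apply_apply]
  · rintro ⟨g', hg', z, hz, hga⟩
    exact ⟨g * g', mul_mem hg hg', z, hz, by rw [Equiv.Perm.mul_apply, Fin.ext hga]⟩

theorem three_mul_mem_zeroOrbit_iff {v : ℕ} (hv : v < n) :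
    3 * v ∈ zeroOrbit n ↔ v ∈ zeroOrbit n := by
  have h := apply_mem_zeroOrbit_iff stdShuffle_mem (⟨v, by omega⟩ : Fin (3 * n))
  rwa [stdShuffle_apply_val, Nat.mod_eq_of_lt hv, Nat.div_eq_of_lt hv, add_zero] at h

theorem add_mem_zeroOrbit_iff {v : ℕ} (hv : v < n) :
    v + n ∈ zeroOrbit n ↔ v ∈ zeroOrbit n := by
  have h := apply_mem_zeroOrbit_iff pilePerm_swap_mem (⟨v, by omega⟩ : Fin (3 * n))
  have hpile : (⟨v / n, shuffleAux.div_lt 3 n ⟨v, by omega⟩⟩ : Fin 3) = 0 :=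
    Fin.ext (Nat.div_eq_of_lt hv)
  rwa [pilePerm_apply_val, hpile, Equiv.swap_apply_left, Nat.mod_eq_of_lt hv, Fin.val_one,
    one_mul] at h

theorem three_mul_add_one_mem_zeroOrbit_iff {v : ℕ} (hv : v < n) :
    3 * v + 1 ∈ zeroOrbit n ↔ v ∈ zeroOrbit n := by
  have h := apply_mem_zeroOrbit_iff stdShuffle_mem (⟨v + n, by omega⟩ : Fin (3 * n))
  rw [stdShuffle_apply_val, Nat.add_mod_right, Nat.mod_eq_of_lt hv,
    Nat.add_div_right _ (by omega), Nat.div_eq_of_lt hv] at h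
  exact h.trans (add_mem_zeroOrbit_iff hv)

theorem pow_mul_mem_zeroOrbit_iff (j : ℕ) {v : ℕ} (hv : 3 ^ j * v < n) :
    3 ^ j * v ∈ zeroOrbit n ↔ v ∈ zeroOrbit n := by
  induction j with
  | zero => simp
  | succ j ih =>
    have hle : 3 ^ j * v ≤ 3 ^ (j + 1) * v :=
      Nat.mul_le_mul_right v (Nat.pow_le_pow_right (by norm_num) j.le_succ)
    rw [pow_succ', mul_assoc, three_mul_mem_zeroOrbit_iff (by omega), ih (by omega)]

theorem add_third_mem_zeroOrbit_iff {m p : ℕ} (hnm : n = 3 * m) (hp : p < m) :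
    p + m ∈ zeroOrbit n ↔ p ∈ zeroOrbit n := by
  rw [← three_mul_mem_zeroOrbit_iff (by omega), show 3 * (p + m) = 3 * p + n by omega,
    add_mem_zeroOrbit_iff (by omega), three_mul_mem_zeroOrbit_iff (by omega)]

theorem add_mem_zeroOrbit_iff_of_eq_pow_mul {r t u : ℕ} (hn : n = 3 ^ (r + 1) * t) (hu : u < t) :
    u + t ∈ zeroOrbit n ↔ u ∈ zeroOrbit n := by
  have hnm : n = 3 * (3 ^ r * t) := by rw [hn, pow_succ']; ring
  have hlt : 3 ^ r * u < 3 ^ r * t := Nat.mul_lt_mul_of_pos_left hu (by positivity)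
  rw [← pow_mul_mem_zeroOrbit_iff r (v := u + t) (by nlinarith), mul_add,
    add_third_mem_zeroOrbit_iff hnm hlt, pow_mul_mem_zeroOrbit_iff r (by omega)]

end shuffleH

open shuffleH in
theorem step_one_general (s t n : ℕ) (hs : 1 ≤ s) (h3t : ¬ 3 ∣ t) (hn : n = 3 ^ s * t) :
    ∀ x : Fin (3 * n), (x : ℕ) < t →
      ∃ g ∈ shuffleH n, g ⟨0, lt_of_le_of_lt (Nat.zero_le _) x.isLt⟩ = x := by
  obtain ⟨r, rfl⟩ : ∃ r, s = r + 1 := ⟨s - 1, by omega⟩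
  have ht : 0 < t := Nat.pos_of_ne_zero (by rintro rfl; exact h3t (dvd_zero 3))
  have htn : t ≤ n := hn ▸ Nat.le_mul_of_pos_left t (by positivity)
  have hmem : ∀ x < t, x ∈ zeroOrbit n :=
    forall_lt_mem_of_closed h3t (zero_mem_zeroOrbit (by omega))
      (fun v hv => (three_mul_mem_zeroOrbit_iff (by omega)).mpr)
      (fun w hw => by
        rw [three_mul_mem_zeroOrbit_iff (by omega), three_mul_add_one_mem_zeroOrbit_iff (by omega)])
      (fun u hu => add_mem_zeroOrbit_iff_of_eq_pow_mul hn hu)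
  intro x hx
  obtain ⟨g, hg, a, ha, hga⟩ := hmem x hx
  have ha' : a = ⟨0, by omega⟩ := Fin.ext ha
  exact ⟨g, hg, by rw [← ha', Fin.ext hga]⟩

theorem step_one (s t n : ℕ) (hs : 1 ≤ s) (ht : 1 < t) (h3t : ¬ 3 ∣ t) (hn : n = 3 ^ s * t) :
    ∀ x : Fin (3 * n), (x : ℕ) < t →
      ∃ g ∈ shuffleH n, g ⟨0, lt_of_le_of_lt (Nat.zero_le _) x.isLt⟩ = x :=
  step_one_general s t n hs h3t hn
end

section
/- Let n = 3^s·t where s ≥ 1, t > 1 and 3 ∤ t. Let x ∈ [3n−1] with x ≥ t, and suppose that x_i ≠ 2 for every i ∈ {0, ..., s}. Then x lies in the H-orbit of 0. -/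
/-- For `x ∈ [3n]` with `n = 3^s·t`, the `i`-th base-3 digit `x_i` of `⌊x/t⌋`. -/
def digit (t x i : ℕ) : ℕ := (x / t / 3 ^ i) % 3

lemma digit_lt (t x i : ℕ) : digit t x i < 3 := Nat.mod_lt _ (by omega)

/-- `T(x) = |{i ∈ {0,...,s} : x_i = 2}|`, the number of base-3 digits of `⌊x/t⌋`
(among positions `0,...,s`) equal to `2`. -/
def twoCount (s t x : ℕ) : ℕ :=
  ((Finset.range (s + 1)).filter (fun i => digit t x i = 2)).card

/-!
Call two positions linked when they lie in one `H`-orbit. From `σ(v) = 3v` and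
`σ(ρ_(01)(v)) = 3v + 1` for `v < n`, a position is linked to its third whenever it is
`≢ 2 (mod 3)`. Conjugating `ρ_(01)` (a shift by `n = 3^(s-j) · 3^j t`) by `σ^(s-j)` links `v`
to `v + 3^j t` for `v < 3^j t`. Removing the leading ternary digit of `⌊x/t⌋`, which is `1`,
reduces `x` to a position below `t`; there the shift by `t`, which changes the residue mod 3
because `3 ∤ t`, lets one always descend to a smaller position, and finally to `0`.
-/

def Linked (n a b : ℕ) : Prop :=
  ∃ (ha : a < 3 * n) (hb : b < 3 * n),
    MulAction.orbitRel (shuffleH n) (Fin (3 * n)) ⟨a, ha⟩ ⟨b, hb⟩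

namespace Linked

variable {n a b c : ℕ}

lemma refl (ha : a < 3 * n) : Linked n a a := ⟨ha, ha, Setoid.refl' _ _⟩

lemma symm : Linked n a b → Linked n b a
  | ⟨ha, hb, h⟩ => ⟨hb, ha, Setoid.symm' _ h⟩

lemma trans : Linked n a b → Linked n b c → Linked n a c
  | ⟨ha, _, h⟩, ⟨_, hc, h'⟩ => ⟨ha, hc, Setoid.trans' _ h h'⟩

lemma of_mem (ha : a < 3 * n) {g : Equiv.Perm (Fin (3 * n))} (hg : g ∈ shuffleH n) :
    Linked n a (g ⟨a, ha⟩) := by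
  refine ⟨ha, (g ⟨a, ha⟩).isLt, Setoid.symm' _ ?_⟩
  rw [MulAction.orbitRel_apply]
  exact ⟨⟨g, hg⟩, rfl⟩

end Linked

section Moves

variable {n v : ℕ}

lemma linked_stdShuffle (hv : v < 3 * n) : Linked n v (3 * (v % n) + v / n) :=
  Linked.of_mem hv (Subgroup.subset_closure (Set.mem_insert _ _))

lemma linked_add_of_lt (hv : v < n) : Linked n v (v + n) := by
  have h := Linked.of_mem (by omega : v < 3 * n)
    (Subgroup.subset_closure (Set.mem_insert_of_mem _ rfl) :
      pilePerm 3 n (Equiv.swap 0 1) ∈ shuffleH n)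
  convert h using 1
  have hpile : (⟨v / n, shuffleAux.div_lt 3 n ⟨v, by omega⟩⟩ : Fin 3) = 0 :=
    Fin.ext (Nat.div_eq_of_lt hv)
  simp [pilePerm, hpile, Nat.mod_eq_of_lt hv]

lemma linked_three_mul (hv : v < n) : Linked n v (3 * v) := by
  simpa [Nat.mod_eq_of_lt hv, Nat.div_eq_of_lt hv] using
    linked_stdShuffle (n := n) (by omega : v < 3 * n)

lemma linked_three_mul_add_one (hv : v < n) : Linked n v (3 * v + 1) := by
  have h := linked_stdShuffle (n := n) (by omega : v + n < 3 * n)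
  rw [Nat.add_mod_right, Nat.mod_eq_of_lt hv, Nat.add_div_right _ (by omega),
    Nat.div_eq_of_lt hv] at h
  exact (linked_add_of_lt hv).trans h

lemma linked_div_three (hv : v < 3 * n) (h2 : v % 3 ≠ 2) : Linked n (v / 3) v := by
  have hvn : v / 3 < n := by omega
  rcases (by omega : v % 3 = 0 ∨ v % 3 = 1) with h0 | h1
  · simpa [show 3 * (v / 3) = v by omega] using linked_three_mul hvn
  · simpa [show 3 * (v / 3) + 1 = v by omega] using linked_three_mul_add_one hvn

lemma linked_succ (hv : v + 1 < 3 * n) (h0 : v % 3 = 0) : Linked n v (v + 1) := by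
  have h := linked_div_three (n := n) (v := v) (by omega) (by omega)
  rw [show v / 3 = (v + 1) / 3 by omega] at h
  exact h.symm.trans (linked_div_three hv (by omega))

lemma linked_pow_mul (k : ℕ) (hv : 3 ^ k * v < 3 * n) : Linked n v (3 ^ k * v) := by
  induction k with
  | zero => simpa using Linked.refl hv
  | succ k ih =>
    have hk : 3 ^ k * v < n := by rw [pow_succ] at hv; nlinarith
    simpa [pow_succ, mul_comm, mul_left_comm, mul_assoc] using
      (ih (by omega)).trans (linked_three_mul hk)

lemma linked_add_pow_mul {s t j : ℕ} (hn : n = 3 ^ s * t) (hj : j ≤ s) (hv : v < 3 ^ j * t) :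
    Linked n v (v + 3 ^ j * t) := by
  have hblock : 3 ^ (s - j) * (3 ^ j * t) = n := by
    rw [hn, ← mul_assoc, ← pow_add, Nat.sub_add_cancel hj]
  have hscaled : 3 ^ (s - j) * v < n := hblock ▸ Nat.mul_lt_mul_of_pos_left hv (by positivity)
  have hsum : 3 ^ (s - j) * (v + 3 ^ j * t) = 3 ^ (s - j) * v + n := by rw [mul_add, hblock]
  have hup := linked_pow_mul (s - j) (by omega : 3 ^ (s - j) * v < 3 * n)
  have hdown := linked_pow_mul (n := n) (s - j) (v := v + 3 ^ j * t) (by omega)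
  rw [hsum] at hdown
  exact hup.trans ((linked_add_of_lt hscaled).trans hdown.symm)

end Moves

lemma exists_pow_le_lt_two_mul_pow {m D : ℕ} (hD : D ≠ 0) (hDm : D < 3 ^ (m + 1))
    (hdig : ∀ i ≤ m, D / 3 ^ i % 3 ≠ 2) : ∃ j ≤ m, 3 ^ j ≤ D ∧ D < 2 * 3 ^ j := by
  have hjm : Nat.log 3 D ≤ m := Nat.lt_succ_iff.mp (Nat.log_lt_of_lt_pow hD hDm)
  refine ⟨Nat.log 3 D, hjm, Nat.pow_log_le_self 3 hD, ?_⟩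
  have hlt : D < 3 * 3 ^ Nat.log 3 D := by
    simpa [pow_succ, mul_comm] using Nat.lt_pow_succ_log_self (by norm_num) D
  have hlead : D / 3 ^ Nat.log 3 D < 3 := (Nat.div_lt_iff_lt_mul (by positivity)).mpr hlt
  exact (Nat.div_lt_iff_lt_mul (by positivity)).mp (by have := hdig _ hjm; omega)

lemma sub_pow_div_pow_mod_three {D j i : ℕ} (h1 : 3 ^ j ≤ D) (h2 : D < 2 * 3 ^ j) :
    (D - 3 ^ j) / 3 ^ i % 3 = if i = j then 0 else D / 3 ^ i % 3 := by
  rcases lt_or_ge i j with hij | hji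
  · have hsplit : D = (D - 3 ^ j) + 3 ^ (j - i) * 3 ^ i := by
      rw [← pow_add, Nat.sub_add_cancel hij.le]; omega
    have hdiv : D / 3 ^ i = (D - 3 ^ j) / 3 ^ i + 3 ^ (j - i) := by
      conv_lhs => rw [hsplit]
      exact Nat.add_mul_div_right _ _ (by positivity)
    obtain ⟨c, hc⟩ : 3 ∣ 3 ^ (j - i) := dvd_pow_self 3 (by omega)
    rw [if_neg hij.ne, hdiv, hc]
    omega
  · have hji' : 3 ^ j ≤ 3 ^ i := Nat.pow_le_pow_right (by norm_num) hji
    rw [Nat.div_eq_of_lt (by omega : D - 3 ^ j < 3 ^ i)]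
    split_ifs with hij
    · rfl
    · have : 3 ^ (j + 1) ≤ 3 ^ i := Nat.pow_le_pow_right (by norm_num) (by omega)
      rw [pow_succ] at this
      rw [Nat.div_eq_of_lt (by omega)]

lemma linked_zero_of_lt {n s t : ℕ} (h3t : ¬ 3 ∣ t) (hn : n = 3 ^ s * t) {v : ℕ} (hv : v < t) :
    Linked n 0 v := by
  have htn : t ≤ n := hn ▸ Nat.le_mul_of_pos_left t (by positivity)
  have hshift : ∀ w < t, Linked n w (w + t) := fun w hw => by
    simpa using linked_add_pow_mul hn (Nat.zero_le s) (j := 0) (by simpa using hw)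
  induction v using Nat.strong_induction_on with
  | _ v ih =>
    rcases Nat.eq_zero_or_pos v with rfl | hv0
    · exact Linked.refl (by omega)
    by_cases hv2 : v % 3 ≠ 2
    · exact (ih (v / 3) (by omega) (by omega)).trans (linked_div_three (by omega) hv2)
    rcases (by omega : t % 3 = 1 ∨ t % 3 = 2) with ht1 | ht2
    · have hv1 : v + 1 < t := by omega
      have hdiv := linked_div_three (n := n) (v := v + 1) (by omega) (by omega)
      have hsucc := linked_succ (n := n) (v := v + t) (by omega) (by omega)
      rw [add_right_comm] at hsucc
      exact (ih _ (by omega) (by omega)).trans <| hdiv.trans <| (hshift _ hv1).trans <|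
        hsucc.symm.trans (hshift v hv).symm
    · have hsucc := linked_succ (n := n) (v := v - 1 + t) (by omega) (by omega)
      rw [show v - 1 + t + 1 = v + t by omega] at hsucc
      exact (ih (v - 1) (by omega) (by omega)).trans <| (hshift _ (by omega)).trans <|
        hsucc.trans (hshift v hv).symm

theorem linked_zero_of_digit_ne_two {n s t : ℕ} (h3t : ¬ 3 ∣ t) (hn : n = 3 ^ s * t) {v : ℕ}
    (hv : v < 3 * n) (hdig : ∀ i ≤ s, digit t v i ≠ 2) : Linked n 0 v := by
  induction v using Nat.strong_induction_on with
  | _ v ih =>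
    rcases lt_or_ge v t with hvt | htv
    · exact linked_zero_of_lt h3t hn hvt
    have ht : 0 < t := Nat.pos_of_ne_zero fun h => by simp [h, hn] at hv
    have hD : v / t ≠ 0 := (Nat.div_pos htv ht).ne'
    have hDs : v / t < 3 ^ (s + 1) :=
      (Nat.div_lt_iff_lt_mul ht).mpr (by rwa [pow_succ, mul_comm _ 3, mul_assoc, ← hn])
    obtain ⟨j, hjs, hj1, hj2⟩ := exists_pow_le_lt_two_mul_pow hD hDs hdig
    have hjv : 3 ^ j * t ≤ v := (Nat.le_div_iff_mul_le ht).mp hj1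
    have hvj : v < 2 * 3 ^ j * t := (Nat.div_lt_iff_lt_mul ht).mp hj2
    have hrest : ∀ i ≤ s, digit t (v - 3 ^ j * t) i ≠ 2 := by
      intro i hi
      rw [digit, mul_comm, Nat.sub_mul_div, sub_pow_div_pow_mod_three hj1 hj2]
      split_ifs
      · omega
      · exact hdig i hi
    have hlink := linked_add_pow_mul hn hjs (v := v - 3 ^ j * t) (by rw [mul_assoc] at hvj; omega)
    rw [Nat.sub_add_cancel hjv] at hlink
    exact (ih _ (Nat.sub_lt (by omega) (by positivity)) (by omega) hrest).trans hlink

theorem step_two_general (s t n : ℕ) (h3t : ¬ 3 ∣ t) (hn : n = 3 ^ s * t)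
    (x : Fin (3 * n)) (hdig : ∀ i ≤ s, digit t (x : ℕ) i ≠ 2) :
    ∃ g ∈ shuffleH n, g ⟨0, lt_of_le_of_lt (Nat.zero_le _) x.isLt⟩ = x := by
  obtain ⟨_, _, hlink⟩ := linked_zero_of_digit_ne_two h3t hn x.isLt hdig
  obtain ⟨⟨g, hg⟩, hgx⟩ := MulAction.orbitRel_apply.mp (Setoid.symm' _ hlink)
  exact ⟨g, hg, hgx⟩

theorem step_two (s t n : ℕ) (hs : 1 ≤ s) (ht : 1 < t) (h3t : ¬ 3 ∣ t) (hn : n = 3 ^ s * t)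
    (x : Fin (3 * n)) (hx1 : t ≤ (x : ℕ)) (hx2 : (x : ℕ) < 3 * n - 1)
    (hdig : ∀ i ≤ s, digit t (x : ℕ) i ≠ 2) :
    ∃ g ∈ shuffleH n, g ⟨0, lt_of_le_of_lt (Nat.zero_le _) x.isLt⟩ = x :=
  step_two_general s t n h3t hn x hdig
end
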